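/- Suppose λ ∈ ρ + C, μ ∈ E, and set β = μ − λ. Then ‖β‖² ≥ (1/2)·Σ_{α ∈ Δ⁺, (α,μ)=0} |(β,α)| (the right-hand side equals (1/2)·nTr_{k_μ}|b|, half the normalized trace on the centralizer k_μ of the element b of the Cartan subalgebra corresponding to β). If equality holds, then μ ∈ C, λ − ρ(λ) = μ − ρ(μ), and λ = μ + ρ_μ (so the shift of the orbit of μ is the orbit of λ). -/

import Mathlib

/-!
Write `b = μ - λ` and `ρ_μ` for the half-sum of the positive roots orthogonal to `μ`. Since
`(λ, α) ≥ (ρ, α) ≥ |α|² / 2` for every positive root `α`, the right-hand side is `-(b, ρ_μ)`, and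
with `y = λ - μ - ρ_μ` one has `‖b‖² + (b, ρ_μ) = ‖y‖² + (ρ_μ, y)`. For a simple root `a` of the
stabilizer system, `(ρ_μ, a) = |a|² / 2 ≤ (λ - μ, a)`, so `y` pairs nonnegatively with every
positive root of that system, hence with `ρ_μ`: this is the inequality, and equality forces `y = 0`.
If `μ` were then not dominant, reflecting it in a simple root `α` with `(μ, α) < 0` would bring it
strictly closer to `λ`, while `s_α`, which permutes the positive roots other than `α`, carries
`ρ_μ` to `ρ_{s_α μ}`; this contradicts `‖ρ_{s_α μ}‖ ≤ ‖λ - s_α μ‖`, a by-product of the same estimate.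
-/

open scoped RealInnerProductSpace
open Finset

section

variable {E : Type*} [NormedAddCommGroup E] [InnerProductSpace ℝ E]

namespace Submodule

theorem inner_reflection_left (K : Submodule ℝ E) [K.HasOrthogonalProjection] (x y : E) :
    ⟪K.reflection x, y⟫ = ⟪x, K.reflection y⟫ := by
  rw [← K.reflection.inner_map_map, reflection_reflection]

theorem reflection_orthogonal_singleton_apply (α x : E) :
    (ℝ ∙ α)ᗮ.reflection x = x - (2 * ⟪x, α⟫ / ⟪α, α⟫) • α := by
  rw [reflection_orthogonal_apply, reflection_singleton_apply, real_inner_self_eq_norm_sq,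
    real_inner_comm]
  simp only [RCLike.ofReal_real_eq_id, id]
  rw [neg_sub, two_smul, ← add_smul]
  ring_nf

theorem inner_reflection_orthogonal_singleton (α x y : E) :
    ⟪(ℝ ∙ α)ᗮ.reflection x, y⟫ = ⟪x, y⟫ - 2 * ⟪x, α⟫ / ⟪α, α⟫ * ⟪α, y⟫ := by
  rw [reflection_orthogonal_singleton_apply, inner_sub_left, real_inner_smul_left]

theorem inner_reflection_orthogonal_singleton_self (α x : E) :
    ⟪(ℝ ∙ α)ᗮ.reflection x, α⟫ = -⟪x, α⟫ := by
  rw [inner_reflection_left, reflection_orthogonalComplement_singleton_eq_neg, inner_neg_right]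

theorem norm_sub_reflection_orthogonal_singleton_sq (α x y : E) :
    ‖x - (ℝ ∙ α)ᗮ.reflection y‖ ^ 2 = ‖x - y‖ ^ 2 + 4 * ⟪x, α⟫ * ⟪y, α⟫ / ⟪α, α⟫ := by
  rcases eq_or_ne ⟪α, α⟫ 0 with hα | hα
  · obtain rfl : α = 0 := inner_self_eq_zero.mp hα
    rw [reflection_orthogonal_singleton_apply]
    simp
  · rw [reflection_orthogonal_singleton_apply, sub_sub_eq_add_sub, add_sub_right_comm,
      norm_add_sq_real, norm_smul, mul_pow, Real.norm_eq_abs, sq_abs,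
      ← real_inner_self_eq_norm_sq α, real_inner_smul_right, inner_sub_left]
    field_simp
    ring

end Submodule

open Submodule

theorem norm_sub_sq_add_inner_eq (x y r : E) :
    ‖x - y‖ ^ 2 + ⟪x - y, r⟫ = ‖y - x - r‖ ^ 2 + ⟪r, y - x - r⟫ := by
  rw [← real_inner_self_eq_norm_sq, ← real_inner_self_eq_norm_sq]
  simp only [inner_sub_left, inner_sub_right, real_inner_comm]
  ring

namespace MagicalInequality

structure IsRootSystem (Δ : Finset E) : Prop where
  zero_notMem : (0 : E) ∉ Δ
  eq_one_or_eq_neg_one_of_smul_mem : ∀ α ∈ Δ, ∀ t : ℝ, t • α ∈ Δ → t = 1 ∨ t = -1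
  reflection_mem : ∀ α ∈ Δ, ∀ β ∈ Δ, (ℝ ∙ α)ᗮ.reflection β ∈ Δ
  exists_int : ∀ α ∈ Δ, ∀ β ∈ Δ, ∃ n : ℤ, 2 * ⟪β, α⟫ / ⟪α, α⟫ = n

noncomputable def posRoots (Δ : Finset E) (v : E) : Finset E :=
  Δ.filter fun α => 0 < ⟪α, v⟫

noncomputable def orthRoots (Δ : Finset E) (μ : E) : Finset E :=
  Δ.filter fun α => ⟪α, μ⟫ = 0

/-- For regular `v` this is `ρ`; `rho Δ μ` is Duflo's `ρ(μ)` and `rho (orthRoots Δ μ) v` is `ρ_μ`. -/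
noncomputable def rho (Δ : Finset E) (v : E) : E :=
  (2 : ℝ)⁻¹ • ∑ α ∈ posRoots Δ v, α

def IsSimpleRoot (Δ : Finset E) (v α : E) : Prop :=
  α ∈ posRoots Δ v ∧ ∀ β ∈ posRoots Δ v, ∀ γ ∈ posRoots Δ v, β + γ ≠ α

variable {Δ : Finset E} {v μ x α β : E}

theorem mem_posRoots : α ∈ posRoots Δ v ↔ α ∈ Δ ∧ 0 < ⟪α, v⟫ :=
  mem_filter

theorem posRoots_orthRoots (Δ : Finset E) (v μ : E) :
    posRoots (orthRoots Δ μ) v = (posRoots Δ v).filter fun α => ⟪α, μ⟫ = 0 :=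
  filter_comm _ _ _

theorem mem_posRoots_orthRoots :
    α ∈ posRoots (orthRoots Δ μ) v ↔ α ∈ posRoots Δ v ∧ ⟪α, μ⟫ = 0 := by
  rw [posRoots_orthRoots, mem_filter]

theorem inner_rho_left (Δ : Finset E) (v x : E) :
    ⟪rho Δ v, x⟫ = 2⁻¹ * ∑ α ∈ posRoots Δ v, ⟪α, x⟫ := by
  rw [rho, real_inner_smul_left, sum_inner]

theorem inner_nonneg_of_isSimpleRoot (hx : ∀ a, IsSimpleRoot Δ v a → 0 ≤ ⟪x, a⟫)
    (hβ : β ∈ posRoots Δ v) : 0 ≤ ⟪x, β⟫ := by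
  by_contra! hβx
  -- a counterexample of minimal height is not simple, but neither are its summands counterexamples
  obtain ⟨β, hβB, hmin⟩ := ((posRoots Δ v).filter fun β => ⟪x, β⟫ < 0).exists_min_image
    (⟪·, v⟫) ⟨β, mem_filter.mpr ⟨hβ, hβx⟩⟩
  rw [mem_filter] at hβB
  obtain ⟨β₁, h₁, β₂, h₂, rfl⟩ : ∃ β₁ ∈ posRoots Δ v, ∃ β₂ ∈ posRoots Δ v, β₁ + β₂ = β := by
    by_contra! h
    exact (hx β ⟨hβB.1, h⟩).not_gt hβB.2
  have hpos₁ := (mem_posRoots.mp h₁).2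
  have hpos₂ := (mem_posRoots.mp h₂).2
  have hmin₁ := hmin β₁
  have hmin₂ := hmin β₂
  simp only [mem_filter, inner_add_left] at hmin₁ hmin₂
  have hx₁ : 0 ≤ ⟪x, β₁⟫ := not_lt.mp fun h => (hmin₁ ⟨h₁, h⟩).not_gt (by linarith)
  have hx₂ : 0 ≤ ⟪x, β₂⟫ := not_lt.mp fun h => (hmin₂ ⟨h₂, h⟩).not_gt (by linarith)
  have := hβB.2
  rw [inner_add_right] at this
  linarith

namespace IsRootSystem

theorem ne_zero (hΔ : IsRootSystem Δ) (hα : α ∈ Δ) : α ≠ 0 :=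
  fun h => hΔ.zero_notMem (h ▸ hα)

theorem inner_self_pos (hΔ : IsRootSystem Δ) (hα : α ∈ Δ) : 0 < ⟪α, α⟫ :=
  real_inner_self_pos.mpr (hΔ.ne_zero hα)

theorem neg_mem (hΔ : IsRootSystem Δ) (hα : α ∈ Δ) : -α ∈ Δ := by
  have := hΔ.reflection_mem α hα α hα
  rwa [reflection_orthogonalComplement_singleton_eq_neg] at this

theorem isRootSystem_orthRoots (hΔ : IsRootSystem Δ) (μ : E) : IsRootSystem (orthRoots Δ μ) where
  zero_notMem h := hΔ.zero_notMem (mem_filter.mp h).1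
  eq_one_or_eq_neg_one_of_smul_mem α hα t ht :=
    hΔ.eq_one_or_eq_neg_one_of_smul_mem α (mem_filter.mp hα).1 t (mem_filter.mp ht).1
  reflection_mem α hα β hβ := by
    simp only [orthRoots, mem_filter] at hα hβ ⊢
    refine ⟨hΔ.reflection_mem α hα.1 β hβ.1, ?_⟩
    rw [inner_reflection_orthogonal_singleton, hα.2, hβ.2, mul_zero, sub_zero]
  exists_int α hα β hβ := hΔ.exists_int α (mem_filter.mp hα).1 β (mem_filter.mp hβ).1

theorem sub_mem (hΔ : IsRootSystem Δ) (hα : α ∈ Δ) (hβ : β ∈ Δ) (hne : β ≠ α)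
    (hpos : 0 < ⟪β, α⟫) : β - α ∈ Δ := by
  have hαα := hΔ.inner_self_pos hα
  have hββ := hΔ.inner_self_pos hβ
  have hCS : ⟪β, α⟫ < ‖β‖ * ‖α‖ := by
    refine inner_lt_norm_mul_iff_real.mpr fun h => hne ?_
    have hα0 : ‖α‖ ≠ 0 := norm_ne_zero_iff.mpr (hΔ.ne_zero hα)
    have hβα : (‖β‖ / ‖α‖) • α = β := by
      rw [div_eq_inv_mul, mul_smul, ← h, inv_smul_smul₀ hα0]
    rcases hΔ.eq_one_or_eq_neg_one_of_smul_mem α hα _ (hβα ▸ hβ) with h1 | h1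
    · rw [← hβα, h1, one_smul]
    · exact absurd h1 (by linarith [div_nonneg (norm_nonneg β) (norm_nonneg α)])
  have hCS2 : ⟪β, α⟫ * ⟪β, α⟫ < ⟪β, β⟫ * ⟪α, α⟫ := by
    rw [real_inner_self_eq_norm_sq, real_inner_self_eq_norm_sq]
    nlinarith
  -- the two Cartan integers are positive with product `< 4`, so one of them is `1`
  obtain ⟨n, hn⟩ := hΔ.exists_int α hα β hβ
  obtain ⟨m, hm⟩ := hΔ.exists_int β hβ α hα
  rw [real_inner_comm] at hm
  have hn0 : 0 < n := by exact_mod_cast (hn ▸ by positivity : (0 : ℝ) < n)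
  have hm0 : 0 < m := by exact_mod_cast (hm ▸ by positivity : (0 : ℝ) < m)
  have hnm : n * m < 4 := by
    suffices (n : ℝ) * m < 4 by exact_mod_cast this
    rw [← hn, ← hm, div_mul_div_comm, div_lt_iff₀ (by positivity)]
    nlinarith
  obtain rfl | rfl : n = 1 ∨ m = 1 := by
    by_contra! h
    nlinarith [(by omega : 2 ≤ n), (by omega : 2 ≤ m)]
  · have := hΔ.reflection_mem α hα β hβ
    rwa [reflection_orthogonal_singleton_apply, hn, Int.cast_one, one_smul] at this
  · have := hΔ.neg_mem (hΔ.reflection_mem β hβ α hα)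
    rwa [reflection_orthogonal_singleton_apply, real_inner_comm, hm, Int.cast_one, one_smul,
      neg_sub] at this

theorem neg_mem_posRoots (hΔ : IsRootSystem Δ) (hv : ∀ γ ∈ Δ, ⟪γ, v⟫ ≠ 0) (hα : α ∈ Δ)
    (hαv : α ∉ posRoots Δ v) : -α ∈ posRoots Δ v := by
  rw [mem_posRoots] at hαv ⊢
  refine ⟨hΔ.neg_mem hα, ?_⟩
  rw [inner_neg_left, neg_pos]
  exact lt_of_le_of_ne (not_lt.mp fun h => hαv ⟨hα, h⟩) (hv α hα)

theorem sum_posRoots_inner_eq_sum_filter (hΔ : IsRootSystem Δ) (hα : α ∈ Δ) :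
    ∑ β ∈ posRoots Δ v, ⟪β, α⟫ =
      ∑ β ∈ (posRoots Δ v).filter (fun β => ⟪(ℝ ∙ α)ᗮ.reflection β, v⟫ ≤ 0), ⟪β, α⟫ := by
  rw [← sum_filter_not_add_sum_filter (posRoots Δ v)
    (fun β => ⟪(ℝ ∙ α)ᗮ.reflection β, v⟫ ≤ 0), add_eq_right]
  -- `s_α` pairs off the positive roots it keeps positive, with opposite values of `⟪·, α⟫`
  refine sum_involution (fun β _ => (ℝ ∙ α)ᗮ.reflection β) (fun β _ => ?_)
    (fun β _ hβ heq => hβ ?_) (fun β hβ => ?_) (fun β _ => reflection_reflection _ β)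
  · rw [inner_reflection_orthogonal_singleton_self, add_neg_cancel]
  · have := inner_reflection_orthogonal_singleton_self α β
    rw [heq] at this
    linarith
  · simp only [mem_filter, mem_posRoots, not_le] at hβ ⊢
    rw [reflection_reflection]
    exact ⟨⟨hΔ.reflection_mem α hα β hβ.1.1, hβ.2⟩, hβ.1.2⟩

theorem inner_self_le_sum_posRoots_inner (hΔ : IsRootSystem Δ) (hα : α ∈ posRoots Δ v) :
    ⟪α, α⟫ ≤ ∑ β ∈ posRoots Δ v, ⟪β, α⟫ := by
  obtain ⟨hαΔ, hαv⟩ := mem_posRoots.mp hα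
  rw [hΔ.sum_posRoots_inner_eq_sum_filter hαΔ]
  refine single_le_sum (f := (⟪·, α⟫)) (fun β hβ => ?_) (mem_filter.mpr ⟨hα, ?_⟩)
  · simp only [mem_filter, mem_posRoots] at hβ
    have hle := hβ.2
    rw [inner_reflection_orthogonal_singleton] at hle
    by_contra! h
    have : 2 * ⟪β, α⟫ / ⟪α, α⟫ < 0 := div_neg_of_neg_of_pos (by linarith) (hΔ.inner_self_pos hαΔ)
    nlinarith [hβ.1.2]
  · rw [reflection_orthogonalComplement_singleton_eq_neg, inner_neg_left]
    linarith

theorem half_inner_self_le_inner_rho (hΔ : IsRootSystem Δ) (hα : α ∈ posRoots Δ v) :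
    2⁻¹ * ⟪α, α⟫ ≤ ⟪rho Δ v, α⟫ := by
  rw [inner_rho_left]
  linarith [hΔ.inner_self_le_sum_posRoots_inner hα]

theorem reflection_mem_posRoots (hΔ : IsRootSystem Δ) (hv : ∀ γ ∈ Δ, ⟪γ, v⟫ ≠ 0)
    (hα : IsSimpleRoot Δ v α) (hβ : β ∈ posRoots Δ v) (hne : β ≠ α) :
    (ℝ ∙ α)ᗮ.reflection β ∈ posRoots Δ v := by
  classical
  set s := (ℝ ∙ α)ᗮ.reflection
  obtain ⟨hαΔ, hαv⟩ := mem_posRoots.mp hα.1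
  by_contra hsβ
  -- for a counterexample `β` of minimal height, `β - α` is a positive root of smaller height, so
  -- `s (β - α) = s β + α` is positive and `α = (s β + α) + (-s β)` is not simple
  obtain ⟨β, hβB, hmin⟩ := ((posRoots Δ v).filter fun β => β ≠ α ∧ s β ∉ posRoots Δ v)
    |>.exists_min_image (⟪·, v⟫) ⟨β, mem_filter.mpr ⟨hβ, hne, hsβ⟩⟩
  obtain ⟨hβ, hne, hsβ⟩ := mem_filter.mp hβB
  obtain ⟨hβΔ, hβv⟩ := mem_posRoots.mp hβ
  have hsβΔ : s β ∈ Δ := hΔ.reflection_mem α hαΔ β hβΔ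
  have hβα : 0 < ⟪β, α⟫ := by
    by_contra! h
    refine hsβ (mem_posRoots.mpr ⟨hsβΔ, ?_⟩)
    rw [inner_reflection_orthogonal_singleton]
    have : 2 * ⟪β, α⟫ / ⟪α, α⟫ ≤ 0 :=
      div_nonpos_of_nonpos_of_nonneg (by linarith) (hΔ.inner_self_pos hαΔ).le
    nlinarith
  have hsub := hΔ.sub_mem hαΔ hβΔ hne hβα
  have hsub_pos : β - α ∈ posRoots Δ v := by
    by_contra h
    have := hΔ.neg_mem_posRoots hv hsub h
    exact hα.2 β hβ _ (by rwa [neg_sub] at this) (add_sub_cancel β α)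
  have hsub_ne : β - α ≠ α := by
    intro h
    rcases hΔ.eq_one_or_eq_neg_one_of_smul_mem α hαΔ 2
      (by rwa [two_smul, ← sub_eq_iff_eq_add.mp h]) with h2 | h2 <;> norm_num at h2
  have hs_sub : s (β - α) ∈ posRoots Δ v := by
    by_contra h
    have := hmin _ (mem_filter.mpr ⟨hsub_pos, hsub_ne, h⟩)
    rw [inner_sub_left] at this
    linarith
  rw [map_sub, reflection_orthogonalComplement_singleton_eq_neg, sub_neg_eq_add] at hs_sub
  exact hα.2 _ hs_sub _ (hΔ.neg_mem_posRoots hv hsβΔ hsβ) (add_neg_cancel_comm _ _)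

theorem inner_rho_of_isSimpleRoot (hΔ : IsRootSystem Δ) (hv : ∀ γ ∈ Δ, ⟪γ, v⟫ ≠ 0)
    (hα : IsSimpleRoot Δ v α) : ⟪rho Δ v, α⟫ = 2⁻¹ * ⟪α, α⟫ := by
  have hαΔ := (mem_posRoots.mp hα.1).1
  have hfilter :
      (posRoots Δ v).filter (fun β => ⟪(ℝ ∙ α)ᗮ.reflection β, v⟫ ≤ 0) = {α} := by
    refine eq_singleton_iff_unique_mem.mpr ⟨mem_filter.mpr ⟨hα.1, ?_⟩, fun β hβ => ?_⟩
    · rw [reflection_orthogonalComplement_singleton_eq_neg, inner_neg_left]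
      linarith [(mem_posRoots.mp hα.1).2]
    · obtain ⟨hβ, hsβ⟩ := mem_filter.mp hβ
      by_contra hne
      exact hsβ.not_gt (mem_posRoots.mp (hΔ.reflection_mem_posRoots hv hα hβ hne)).2
  rw [inner_rho_left, hΔ.sum_posRoots_inner_eq_sum_filter hαΔ, hfilter, sum_singleton]

theorem inner_rho_sub_nonneg (hΔ : IsRootSystem Δ) (hv : ∀ γ ∈ Δ, ⟪γ, v⟫ ≠ 0)
    (hx : ∀ α ∈ posRoots Δ v, 2⁻¹ * ⟪α, α⟫ ≤ ⟪x, α⟫) : 0 ≤ ⟪rho Δ v, x - rho Δ v⟫ := by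
  have hdom : ∀ β ∈ posRoots Δ v, 0 ≤ ⟪x - rho Δ v, β⟫ := fun β hβ =>
    inner_nonneg_of_isSimpleRoot (fun a ha => by
      rw [inner_sub_left, hΔ.inner_rho_of_isSimpleRoot hv ha]
      linarith [hx a ha.1]) hβ
  rw [inner_rho_left]
  exact mul_nonneg (by norm_num) (sum_nonneg fun β hβ => real_inner_comm β _ ▸ hdom β hβ)

theorem posRoots_eq_filter_of_dominant (hΔ : IsRootSystem Δ) (hv : ∀ γ ∈ Δ, ⟪γ, v⟫ ≠ 0)
    (hx : ∀ α ∈ posRoots Δ v, 0 ≤ ⟪x, α⟫) :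
    posRoots Δ x = (posRoots Δ v).filter fun α => ¬⟪α, x⟫ = 0 := by
  ext α
  simp only [mem_filter, mem_posRoots]
  constructor
  · rintro ⟨hαΔ, hαx⟩
    refine ⟨⟨hαΔ, not_le.mp fun hαv => ?_⟩, hαx.ne'⟩
    have := hx _ (hΔ.neg_mem_posRoots hv hαΔ fun h => (mem_posRoots.mp h).2.not_ge hαv)
    rw [inner_neg_right, real_inner_comm] at this
    linarith
  · rintro ⟨⟨hαΔ, hαv⟩, hαx⟩
    exact ⟨hαΔ, lt_of_le_of_ne (real_inner_comm α x ▸ hx α (mem_posRoots.mpr ⟨hαΔ, hαv⟩))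
      (Ne.symm hαx)⟩

theorem rho_eq_sub_rho_orthRoots_of_dominant (hΔ : IsRootSystem Δ)
    (hv : ∀ γ ∈ Δ, ⟪γ, v⟫ ≠ 0) (hx : ∀ α ∈ posRoots Δ v, 0 ≤ ⟪x, α⟫) :
    rho Δ x = rho Δ v - rho (orthRoots Δ x) v := by
  rw [rho, rho, rho, hΔ.posRoots_eq_filter_of_dominant hv hx, posRoots_orthRoots,
    ← sum_filter_add_sum_filter_not (posRoots Δ v) (fun α => ⟪α, x⟫ = 0), smul_add,
    add_sub_cancel_left]

theorem reflection_mem_posRoots_orthRoots (hΔ : IsRootSystem Δ) (hv : ∀ γ ∈ Δ, ⟪γ, v⟫ ≠ 0)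
    (hα : IsSimpleRoot Δ v α) (hαμ : ⟪α, μ⟫ ≠ 0) (hβ : β ∈ posRoots (orthRoots Δ μ) v) :
    (ℝ ∙ α)ᗮ.reflection β ∈ posRoots (orthRoots Δ ((ℝ ∙ α)ᗮ.reflection μ)) v := by
  obtain ⟨hβ, hβμ⟩ := mem_posRoots_orthRoots.mp hβ
  refine mem_posRoots_orthRoots.mpr ⟨hΔ.reflection_mem_posRoots hv hα hβ ?_, ?_⟩
  · rintro rfl
    exact hαμ hβμ
  · rwa [LinearIsometryEquiv.inner_map_map]

theorem rho_orthRoots_reflection (hΔ : IsRootSystem Δ) (hv : ∀ γ ∈ Δ, ⟪γ, v⟫ ≠ 0)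
    (hα : IsSimpleRoot Δ v α) (hαμ : ⟪α, μ⟫ ≠ 0) :
    rho (orthRoots Δ ((ℝ ∙ α)ᗮ.reflection μ)) v = (ℝ ∙ α)ᗮ.reflection (rho (orthRoots Δ μ) v) := by
  have hαsμ : ⟪α, (ℝ ∙ α)ᗮ.reflection μ⟫ ≠ 0 := by
    rwa [← inner_reflection_left, reflection_orthogonalComplement_singleton_eq_neg,
      inner_neg_left, neg_ne_zero]
  rw [rho, rho, map_smul, map_sum]
  congr 1
  refine (sum_nbij' _ _ (fun β hβ => hΔ.reflection_mem_posRoots_orthRoots hv hα hαμ hβ)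
    (fun β hβ => ?_) (fun β _ => reflection_reflection _ β)
    (fun β _ => reflection_reflection _ β) (fun _ _ => rfl)).symm
  simpa only [reflection_reflection] using hΔ.reflection_mem_posRoots_orthRoots hv hα hαsμ hβ

end IsRootSystem

theorem rho_orthRoots_eq_zero (hx : ∀ α ∈ posRoots Δ v, 0 < ⟪x, α⟫) :
    rho (orthRoots Δ x) v = 0 := by
  rw [rho, posRoots_orthRoots, filter_false_of_mem, sum_empty, smul_zero]
  exact fun α hα h => (hx α hα).ne' (by rwa [real_inner_comm])

section Stabilizer

variable {lam : E}

theorem half_inner_self_le_inner_sub_of_mem_posRoots_orthRoots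
    (hlam : ∀ α ∈ posRoots Δ v, 2⁻¹ * ⟪α, α⟫ ≤ ⟪lam, α⟫) (hα : α ∈ posRoots (orthRoots Δ μ) v) :
    2⁻¹ * ⟪α, α⟫ ≤ ⟪lam - μ, α⟫ := by
  obtain ⟨hα, hαμ⟩ := mem_posRoots_orthRoots.mp hα
  rw [inner_sub_left, real_inner_comm α μ, hαμ, sub_zero]
  exact hlam α hα

theorem IsRootSystem.sum_abs_inner_eq_neg_inner_rho_orthRoots (hΔ : IsRootSystem Δ)
    (hlam : ∀ α ∈ posRoots Δ v, 2⁻¹ * ⟪α, α⟫ ≤ ⟪lam, α⟫) (μ : E) :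
    2⁻¹ * ∑ α ∈ posRoots (orthRoots Δ μ) v, |⟪μ - lam, α⟫| =
      -⟪μ - lam, rho (orthRoots Δ μ) v⟫ := by
  rw [real_inner_comm, inner_rho_left, ← mul_neg, ← sum_neg_distrib]
  refine congrArg _ (sum_congr rfl fun α hα => ?_)
  have hαα := hΔ.inner_self_pos (mem_posRoots.mp (mem_posRoots_orthRoots.mp hα).1).1
  have := half_inner_self_le_inner_sub_of_mem_posRoots_orthRoots hlam hα
  rw [← neg_sub lam μ, inner_neg_left, inner_neg_right, abs_neg, neg_neg,
    abs_of_pos (by linarith), real_inner_comm]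

theorem IsRootSystem.inner_rho_orthRoots_sub_nonneg (hΔ : IsRootSystem Δ)
    (hv : ∀ γ ∈ Δ, ⟪γ, v⟫ ≠ 0) (hlam : ∀ α ∈ posRoots Δ v, 2⁻¹ * ⟪α, α⟫ ≤ ⟪lam, α⟫) (μ : E) :
    0 ≤ ⟪rho (orthRoots Δ μ) v, lam - μ - rho (orthRoots Δ μ) v⟫ :=
  (hΔ.isRootSystem_orthRoots μ).inner_rho_sub_nonneg (fun γ hγ => hv γ (mem_filter.mp hγ).1)
    fun _ hα => half_inner_self_le_inner_sub_of_mem_posRoots_orthRoots hlam hα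

theorem IsRootSystem.norm_rho_orthRoots_sq_le (hΔ : IsRootSystem Δ)
    (hv : ∀ γ ∈ Δ, ⟪γ, v⟫ ≠ 0) (hlam : ∀ α ∈ posRoots Δ v, 2⁻¹ * ⟪α, α⟫ ≤ ⟪lam, α⟫) (μ : E) :
    ‖rho (orthRoots Δ μ) v‖ ^ 2 ≤ ‖lam - μ‖ ^ 2 := by
  have h := norm_add_sq_real (rho (orthRoots Δ μ) v) (lam - μ - rho (orthRoots Δ μ) v)
  rw [add_sub_cancel] at h
  nlinarith [hΔ.inner_rho_orthRoots_sub_nonneg hv hlam μ,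
    sq_nonneg ‖lam - μ - rho (orthRoots Δ μ) v‖]

theorem IsRootSystem.norm_sq_add_inner_rho_orthRoots_nonneg (hΔ : IsRootSystem Δ)
    (hv : ∀ γ ∈ Δ, ⟪γ, v⟫ ≠ 0) (hlam : ∀ α ∈ posRoots Δ v, 2⁻¹ * ⟪α, α⟫ ≤ ⟪lam, α⟫) (μ : E) :
    0 ≤ ‖μ - lam‖ ^ 2 + ⟪μ - lam, rho (orthRoots Δ μ) v⟫ := by
  rw [norm_sub_sq_add_inner_eq]
  nlinarith [hΔ.inner_rho_orthRoots_sub_nonneg hv hlam μ,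
    sq_nonneg ‖lam - μ - rho (orthRoots Δ μ) v‖]

theorem IsRootSystem.eq_add_rho_orthRoots_of_norm_sq_add_inner_eq_zero (hΔ : IsRootSystem Δ)
    (hv : ∀ γ ∈ Δ, ⟪γ, v⟫ ≠ 0) (hlam : ∀ α ∈ posRoots Δ v, 2⁻¹ * ⟪α, α⟫ ≤ ⟪lam, α⟫)
    (h : ‖μ - lam‖ ^ 2 + ⟪μ - lam, rho (orthRoots Δ μ) v⟫ = 0) :
    lam = μ + rho (orthRoots Δ μ) v := by
  rw [norm_sub_sq_add_inner_eq] at h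
  have hy : ‖lam - μ - rho (orthRoots Δ μ) v‖ ^ 2 = 0 := by
    nlinarith [hΔ.inner_rho_orthRoots_sub_nonneg hv hlam μ,
      sq_nonneg ‖lam - μ - rho (orthRoots Δ μ) v‖]
  rwa [sq_eq_zero_iff, norm_eq_zero, sub_sub, sub_eq_zero] at hy

theorem IsRootSystem.dominant_of_eq_add_rho_orthRoots (hΔ : IsRootSystem Δ)
    (hv : ∀ γ ∈ Δ, ⟪γ, v⟫ ≠ 0) (hlam : ∀ α ∈ posRoots Δ v, 2⁻¹ * ⟪α, α⟫ ≤ ⟪lam, α⟫)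
    (heq : lam = μ + rho (orthRoots Δ μ) v) : ∀ α ∈ posRoots Δ v, 0 ≤ ⟪μ, α⟫ := by
  by_contra! hμ
  obtain ⟨α, hα, hμα⟩ : ∃ α, IsSimpleRoot Δ v α ∧ ⟪μ, α⟫ < 0 := by
    by_contra! h
    obtain ⟨β, hβ, hμβ⟩ := hμ
    exact (inner_nonneg_of_isSimpleRoot h hβ).not_gt hμβ
  have hαα := hΔ.inner_self_pos (mem_posRoots.mp hα.1).1
  have hlamα : 0 < ⟪lam, α⟫ := by linarith [hlam α hα.1]
  have hαμ : ⟪α, μ⟫ ≠ 0 := by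
    rw [real_inner_comm]
    exact hμα.ne
  -- reflecting `μ` moves it closer to `lam` without changing the norm of `ρ_μ`
  have : ‖rho (orthRoots Δ μ) v‖ ^ 2 < ‖rho (orthRoots Δ μ) v‖ ^ 2 := calc
    ‖rho (orthRoots Δ μ) v‖ ^ 2 = ‖rho (orthRoots Δ ((ℝ ∙ α)ᗮ.reflection μ)) v‖ ^ 2 := by
      rw [hΔ.rho_orthRoots_reflection hv hα hαμ, LinearIsometryEquiv.norm_map]
    _ ≤ ‖lam - (ℝ ∙ α)ᗮ.reflection μ‖ ^ 2 := hΔ.norm_rho_orthRoots_sq_le hv hlam _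
    _ = ‖lam - μ‖ ^ 2 + 4 * ⟪lam, α⟫ * ⟪μ, α⟫ / ⟪α, α⟫ :=
      norm_sub_reflection_orthogonal_singleton_sq α lam μ
    _ < ‖lam - μ‖ ^ 2 := by
      have : 4 * ⟪lam, α⟫ * ⟪μ, α⟫ / ⟪α, α⟫ < 0 := div_neg_of_neg_of_pos (by nlinarith) hαα
      linarith
    _ = ‖rho (orthRoots Δ μ) v‖ ^ 2 := by rw [heq, add_sub_cancel_left]
  exact lt_irrefl _ this

end Stabilizer

end MagicalInequality

end

open MagicalInequality

theorem magical_inequality_trace_form_general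
    {E : Type*} [NormedAddCommGroup E] [InnerProductSpace ℝ E]
    (Δ : Finset E)
    (hΔ0 : (0 : E) ∉ Δ)
    (hΔred : ∀ α ∈ Δ, ∀ t : ℝ, t • α ∈ Δ → t = 1 ∨ t = -1)
    (hΔrefl : ∀ α ∈ Δ, ∀ β ∈ Δ, β - (2 * ⟪β, α⟫ / ⟪α, α⟫) • α ∈ Δ)
    (hΔcrys : ∀ α ∈ Δ, ∀ β ∈ Δ, ∃ n : ℤ, 2 * ⟪β, α⟫ / ⟪α, α⟫ = (n : ℝ))
    (v : E) (hv : ∀ α ∈ Δ, ⟪α, v⟫ ≠ 0)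
    (Δpos : Finset E) (hΔpos : Δpos = Δ.filter (fun α => 0 < ⟪α, v⟫))
    (ρ : E) (hρ : ρ = (2 : ℝ)⁻¹ • ∑ α ∈ Δpos, α)    (lam μ : E)
    (hlam : ∀ α ∈ Δpos, 0 ≤ ⟪lam - ρ, α⟫)
    (ρμ : E) (hρμ : ρμ = (2 : ℝ)⁻¹ • ∑ α ∈ Δpos.filter (fun α => ⟪α, μ⟫ = 0), α)
    (ρlam : E) (hρlam : ρlam = (2 : ℝ)⁻¹ • ∑ α ∈ Δ.filter (fun α => 0 < ⟪α, lam⟫), α)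
    (ρμD : E) (hρμD : ρμD = (2 : ℝ)⁻¹ • ∑ α ∈ Δ.filter (fun α => 0 < ⟪α, μ⟫), α)
    (b : E) (hb : b = μ - lam) :
    ‖b‖ ^ 2 ≥ (2 : ℝ)⁻¹ * ∑ α ∈ Δpos.filter (fun α => ⟪α, μ⟫ = 0), |⟪b, α⟫| ∧
    (‖b‖ ^ 2 = (2 : ℝ)⁻¹ * ∑ α ∈ Δpos.filter (fun α => ⟪α, μ⟫ = 0), |⟪b, α⟫| →
      (∀ α ∈ Δpos, 0 ≤ ⟪μ, α⟫) ∧ lam - ρlam = μ - ρμD ∧ lam = μ + ρμ) := by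
  replace hΔpos : Δpos = posRoots Δ v := hΔpos
  subst hΔpos
  replace hρ : ρ = rho Δ v := hρ
  replace hρμ : ρμ = rho (orthRoots Δ μ) v := by rw [hρμ, rho, posRoots_orthRoots]
  replace hρlam : ρlam = rho Δ lam := hρlam
  replace hρμD : ρμD = rho Δ μ := hρμD
  subst hρ hρμ hρlam hρμD hb
  have hΔ : IsRootSystem Δ := ⟨hΔ0, hΔred, fun α hα β hβ => by
    rw [Submodule.reflection_orthogonal_singleton_apply]; exact hΔrefl α hα β hβ, hΔcrys⟩
  have hlam' : ∀ α ∈ posRoots Δ v, 2⁻¹ * ⟪α, α⟫ ≤ ⟪lam, α⟫ := fun α hα => by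
    have := hlam α hα
    rw [inner_sub_left] at this
    linarith [hΔ.half_inner_self_le_inner_rho hα]
  have hlam_pos : ∀ α ∈ posRoots Δ v, 0 < ⟪lam, α⟫ := fun α hα => by
    linarith [hlam' α hα, hΔ.inner_self_pos (mem_posRoots.mp hα).1]
  rw [← posRoots_orthRoots, ge_iff_le, hΔ.sum_abs_inner_eq_neg_inner_rho_orthRoots hlam']
  refine ⟨by linarith [hΔ.norm_sq_add_inner_rho_orthRoots_nonneg hv hlam' μ], fun heq => ?_⟩
  have hlamμ := hΔ.eq_add_rho_orthRoots_of_norm_sq_add_inner_eq_zero hv hlam' (by linarith)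
  have hμ := hΔ.dominant_of_eq_add_rho_orthRoots hv hlam' hlamμ
  refine ⟨hμ, ?_, hlamμ⟩
  rw [hΔ.rho_eq_sub_rho_orthRoots_of_dominant hv fun α hα => (hlam_pos α hα).le,
    hΔ.rho_eq_sub_rho_orthRoots_of_dominant hv hμ, rho_orthRoots_eq_zero hlam_pos, hlamμ]
  abel

theorem magical_inequality_trace_form
    {E : Type*} [NormedAddCommGroup E] [InnerProductSpace ℝ E] [FiniteDimensional ℝ E]
    (Δ : Finset E)
    (hΔ0 : (0 : E) ∉ Δ)
    (hΔred : ∀ α ∈ Δ, ∀ t : ℝ, t • α ∈ Δ → t = 1 ∨ t = -1)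
    (hΔrefl : ∀ α ∈ Δ, ∀ β ∈ Δ, β - (2 * ⟪β, α⟫ / ⟪α, α⟫) • α ∈ Δ)
    (hΔcrys : ∀ α ∈ Δ, ∀ β ∈ Δ, ∃ n : ℤ, 2 * ⟪β, α⟫ / ⟪α, α⟫ = (n : ℝ))
    (v : E) (hv : ∀ α ∈ Δ, ⟪α, v⟫ ≠ 0)
    (Δpos : Finset E) (hΔpos : Δpos = Δ.filter (fun α => 0 < ⟪α, v⟫))
    (ρ : E) (hρ : ρ = (2 : ℝ)⁻¹ • ∑ α ∈ Δpos, α)    (lam μ : E)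
    (hlam : ∀ α ∈ Δpos, 0 ≤ ⟪lam - ρ, α⟫)
    (ρμ : E) (hρμ : ρμ = (2 : ℝ)⁻¹ • ∑ α ∈ Δpos.filter (fun α => ⟪α, μ⟫ = 0), α)
    (ρlam : E) (hρlam : ρlam = (2 : ℝ)⁻¹ • ∑ α ∈ Δ.filter (fun α => 0 < ⟪α, lam⟫), α)
    (ρμD : E) (hρμD : ρμD = (2 : ℝ)⁻¹ • ∑ α ∈ Δ.filter (fun α => 0 < ⟪α, μ⟫), α)
    (b : E) (hb : b = μ - lam) :
    ‖b‖ ^ 2 ≥ (2 : ℝ)⁻¹ * ∑ α ∈ Δpos.filter (fun α => ⟪α, μ⟫ = 0), |⟪b, α⟫| ∧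
    (‖b‖ ^ 2 = (2 : ℝ)⁻¹ * ∑ α ∈ Δpos.filter (fun α => ⟪α, μ⟫ = 0), |⟪b, α⟫| →
      (∀ α ∈ Δpos, 0 ≤ ⟪μ, α⟫) ∧ lam - ρlam = μ - ρμD ∧ lam = μ + ρμ) :=
  magical_inequality_trace_form_general Δ hΔ0 hΔred hΔrefl hΔcrys v hv Δpos hΔpos ρ hρ lam μ hlam ρμ
    hρμ ρlam hρlam ρμD hρμD b hb
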